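/- arXiv:1902.00523 — 5 statements merged into one kernel-verified Lean document; each statement's English description precedes it below -/
import Mathlib

section
/- A soft set F with parameter set A over the universe U is a terminal object in the category of soft sets over U (i.e., for every soft set G with parameter set B over U there exists exactly one soft morphism from (B, G) to (A, F)) if and only if A has exactly one element and F is the absolute soft set, i.e., F(a) = U for every a ∈ A. -/
/-- A soft morphism from a soft set `(A, F)` to a soft set `(B, G)` over the universe `U`
is a function `α : A → B` such that `F a ⊆ G (α a)` for every `a`. -/
def IsSoftMorphism {U A B : Type} (F : A → Set U) (G : B → Set U) (α : A → B) : Prop :=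
  ∀ a : A, F a ⊆ G (α a)

/-!
Every map out of the empty soft set `(Unit, ∅)` is a soft morphism, so uniqueness of morphisms
out of it forces `A` to be a subsingleton; a morphism out of the absolute soft set `(Unit, U)`
picks a parameter `a` with `F a = U`, so `A` is nonempty and `F` is absolute. Conversely, into an
absolute soft set on a single parameter every map is a soft morphism, and there is only one map.
-/

namespace IsSoftMorphism

variable {U A B : Type} {F : A → Set U} {G : B → Set U}

theorem of_forall_eq_univ (hG : ∀ b, G b = Set.univ) (α : A → B) : IsSoftMorphism F G α :=
  fun a => (hG (α a)).symm ▸ Set.subset_univ (F a)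

theorem of_forall_eq_empty (hF : ∀ a, F a = ∅) (α : A → B) : IsSoftMorphism F G α :=
  fun a => (hF a).symm ▸ Set.empty_subset (G (α a))

theorem eq_univ_of_source_univ {α : A → B} (hα : IsSoftMorphism (fun _ => Set.univ) G α) (a : A) :
    G (α a) = Set.univ :=
  Set.univ_subset_iff.mp (hα a)

end IsSoftMorphism

theorem subsingleton_of_existsUnique_softMorphism_of_empty {U A : Type} {F : A → Set U}
    (h : ∃! α : Unit → A, IsSoftMorphism (fun _ => ∅) F α) : Subsingleton A :=
  ⟨fun a b => congrFun
    (h.unique (.of_forall_eq_empty (fun _ => rfl) fun _ => a)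
      (.of_forall_eq_empty (fun _ => rfl) fun _ => b)) ()⟩

/-- A soft set `(A, F)` over `U` is a terminal object in the category of soft sets over `U`
(for every soft set `(B, G)` there is exactly one soft morphism from `(B, G)` to `(A, F)`)
if and only if `A` has exactly one element and `F` is the absolute soft set. -/
theorem softSet_terminal_iff {U A : Type} (F : A → Set U) :
    (∀ (B : Type) (G : B → Set U), ∃! α : B → A, IsSoftMorphism G F α) ↔
      ((Nonempty A ∧ Subsingleton A) ∧ ∀ a : A, F a = Set.univ) := by
  constructor
  · intro h
    have hsub : Subsingleton A :=
      subsingleton_of_existsUnique_softMorphism_of_empty (h Unit fun _ => ∅)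
    obtain ⟨α, hα, -⟩ := h Unit fun _ => Set.univ
    refine ⟨⟨⟨α ()⟩, hsub⟩, fun a => ?_⟩
    rw [Subsingleton.elim a (α ())]
    exact hα.eq_univ_of_source_univ ()
  · rintro ⟨⟨⟨a₀⟩, hsub⟩, habs⟩ B G
    exact ⟨fun _ => a₀, .of_forall_eq_univ habs _, fun _ _ => Subsingleton.elim _ _⟩
end

section
/- A soft set H with parameter set C over the universe U is a separator in the category of soft sets over U if and only if C is nonempty and H is the null soft set, i.e., H(c) = ∅ for every c ∈ C. Here (C, H) is a separator means: whenever α, β are soft morphisms from a soft set (A, F) to a soft set (B, G) over U with α ≠ β, there exists a soft morphism γ from (C, H) to (A, F) such that α ∘ γ ≠ β ∘ γ. -/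
def IsSoftSeparator {U C : Type} (H : C → Set U) : Prop :=
  ∀ (A B : Type) (F : A → Set U) (G : B → Set U) (α β : A → B),
    IsSoftMorphism F G α → IsSoftMorphism F G β → α ≠ β →
    ∃ γ : C → A, IsSoftMorphism H F γ ∧ α ∘ γ ≠ β ∘ γ

section

variable {U A B : Type}

theorem isSoftMorphism_of_forall_eq_empty {F : A → Set U} (hF : ∀ a, F a = ∅)
    (G : B → Set U) (α : A → B) : IsSoftMorphism F G α := fun a => by
  rw [hF a]
  exact Set.empty_subset _

theorem IsSoftMorphism.eq_empty_of_forall_eq_empty {F : A → Set U} {G : B → Set U}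
    {α : A → B} (hα : IsSoftMorphism F G α) (hG : ∀ b, G b = ∅) (a : A) : F a = ∅ :=
  Set.subset_empty_iff.mp (hG (α a) ▸ hα a)

end

section

variable {U C : Type} {H : C → Set U}

/-- Testing against the two distinct endomorphisms `id` and `not` of the null soft set over
`Bool`: a morphism into a null soft set forces `H` to be null, and telling the two
composites apart needs a point of `C`. -/
theorem IsSoftSeparator.nonempty_and_forall_eq_empty (hH : IsSoftSeparator H) :
    Nonempty C ∧ ∀ c, H c = ∅ := by
  have hnull : ∀ _ : Bool, (∅ : Set U) = ∅ := fun _ => rfl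
  obtain ⟨γ, hγ, hne⟩ := hH Bool Bool (fun _ => ∅) (fun _ => ∅) id not
    (isSoftMorphism_of_forall_eq_empty hnull _ _) (isSoftMorphism_of_forall_eq_empty hnull _ _)
    Bool.not_ne_id.symm
  obtain ⟨c, -⟩ := Function.ne_iff.mp hne
  exact ⟨⟨c⟩, hγ.eq_empty_of_forall_eq_empty hnull⟩

theorem isSoftSeparator_of_forall_eq_empty [Nonempty C] (hH : ∀ c, H c = ∅) :
    IsSoftSeparator H := by
  intro A B F G α β _ _ hne
  obtain ⟨a, ha⟩ := Function.ne_iff.mp hne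
  refine ⟨fun _ => a, isSoftMorphism_of_forall_eq_empty hH F _, fun h => ha ?_⟩
  exact congrFun h (Classical.arbitrary C)

theorem isSoftSeparator_iff : IsSoftSeparator H ↔ Nonempty C ∧ ∀ c, H c = ∅ :=
  ⟨IsSoftSeparator.nonempty_and_forall_eq_empty,
    fun ⟨_, hH⟩ => isSoftSeparator_of_forall_eq_empty hH⟩

end

/-- A soft set `(C, H)` over `U` is a separator in the category of soft sets over `U`
if and only if `C` is nonempty and `H` is the null soft set. -/
theorem softSet_separator_iff {U C : Type} (H : C → Set U) :
    (∀ (A B : Type) (F : A → Set U) (G : B → Set U) (α β : A → B),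
        IsSoftMorphism F G α → IsSoftMorphism F G β → α ≠ β →
        ∃ γ : C → A, IsSoftMorphism H F γ ∧ α ∘ γ ≠ β ∘ γ) ↔
      (Nonempty C ∧ ∀ c : C, H c = ∅) :=
  isSoftSeparator_iff
end

section
/- A soft set H with parameter set C over the universe U is a co-separator in the category of soft sets over U if and only if there exist c₁, c₂ ∈ C with c₁ ≠ c₂ and H(c₁) = H(c₂) = U. Here (C, H) is a co-separator means: whenever α, β are soft morphisms from a soft set (A, F) to a soft set (B, G) over U with α ≠ β, there exists a soft morphism γ from (B, G) to (C, H) such that γ ∘ α ≠ γ ∘ β. -/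
/-!
A co-separator must tell apart the two parameters of the soft set `Bool ↦ U` via the two
morphisms into it from the empty soft set on `Unit`; a soft morphism sends a parameter with
value `U` to one with value `U`, which yields `c₁ ≠ c₂` with `H c₁ = H c₂ = U`. Conversely,
a map into `{c₁, c₂}` is a soft morphism from anything, and two distinct points suffice to
separate distinct maps of sets.
-/

section SoftMorphism

variable {U A B C : Type}

theorem isSoftMorphism_const_empty (G : B → Set U) (α : A → B) :
    IsSoftMorphism (fun _ => (∅ : Set U)) G α :=
  fun _ => Set.empty_subset _

theorem isSoftMorphism_of_forall_eq_univ (G : B → Set U) {H : C → Set U} {γ : B → C}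
    (hγ : ∀ b, H (γ b) = Set.univ) : IsSoftMorphism G H γ :=
  fun b => (hγ b).symm ▸ Set.subset_univ _

theorem IsSoftMorphism.map_eq_univ {G : B → Set U} {H : C → Set U} {γ : B → C}
    (hγ : IsSoftMorphism G H γ) {b : B} (hb : G b = Set.univ) : H (γ b) = Set.univ :=
  Set.eq_univ_of_univ_subset (hb ▸ hγ b)

end SoftMorphism

theorem exists_comp_ne_comp_of_ne {A B C : Type} {c₁ c₂ : C} (hc : c₁ ≠ c₂) {α β : A → B}
    (hne : α ≠ β) : ∃ γ : B → C, (∀ b, γ b = c₁ ∨ γ b = c₂) ∧ γ ∘ α ≠ γ ∘ β := by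
  classical
  obtain ⟨a, ha⟩ := Function.ne_iff.mp hne
  refine ⟨Function.update (fun _ => c₂) (α a) c₁, fun b => ?_, fun h => hc ?_⟩
  · by_cases hb : b = α a
    · exact .inl (hb ▸ Function.update_self _ _ _)
    · exact .inr (Function.update_of_ne hb _ _)
  · simpa [Function.update_of_ne (Ne.symm ha)] using congrFun h a

/-- A soft set `(C, H)` over `U` is a co-separator in the category of soft sets over `U`
if and only if there exist distinct `c₁ c₂ ∈ C` with `H c₁ = H c₂ = U`. -/
theorem softSet_coseparator_iff {U C : Type} (H : C → Set U) :
    (∀ (A B : Type) (F : A → Set U) (G : B → Set U) (α β : A → B),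
        IsSoftMorphism F G α → IsSoftMorphism F G β → α ≠ β →
        ∃ γ : B → C, IsSoftMorphism G H γ ∧ γ ∘ α ≠ γ ∘ β) ↔
      (∃ c₁ c₂ : C, c₁ ≠ c₂ ∧ H c₁ = Set.univ ∧ H c₂ = Set.univ) := by
  constructor
  · intro hcosep
    obtain ⟨γ, hγ, hne⟩ := hcosep Unit Bool (fun _ => ∅) (fun _ => Set.univ)
      (fun _ => true) (fun _ => false) (isSoftMorphism_const_empty _ _)
      (isSoftMorphism_const_empty _ _) (fun h => Bool.true_eq_false.mp (congrFun h ()))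
    exact ⟨γ true, γ false, fun h => hne (funext fun _ => h),
      hγ.map_eq_univ rfl, hγ.map_eq_univ rfl⟩
  · rintro ⟨c₁, c₂, hc, h₁, h₂⟩ A B F G α β - - hne
    obtain ⟨γ, hγ, hsep⟩ := exists_comp_ne_comp_of_ne hc hne
    refine ⟨γ, isSoftMorphism_of_forall_eq_univ G fun b => ?_, hsep⟩
    rcases hγ b with h | h <;> rw [h] <;> assumption
end

section
/- A soft morphism α from a soft set (A, F) to a soft set (B, G) over the universe U is an epimorphism in the category of soft sets over U (i.e., for every soft set (C, H) over U and all soft morphisms β, γ from (B, G) to (C, H), β ∘ α = γ ∘ α implies β = γ) if and only if α is surjective. -/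
theorem isSoftMorphism_to_univ {U A B : Type} (F : A → Set U) (f : A → B) :
    IsSoftMorphism F (fun _ => Set.univ) f :=
  fun _ _ _ => trivial

theorem softMorphism_epi_iff_surjective_general {U A B : Type} (G : B → Set U)
    (α : A → B) :
    (∀ (C : Type) (H : C → Set U) (β γ : B → C),
        IsSoftMorphism G H β → IsSoftMorphism G H γ → β ∘ α = γ ∘ α → β = γ) ↔
      Function.Surjective α := by
  refine ⟨fun hepi => ?_, fun hsurj C H β γ _ _ hcomp => hsurj.injective_comp_right hcomp⟩
  -- Test against the soft set `(Prop, fun _ => univ)`.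
  exact Function.surjective_of_right_cancellable_Prop fun β γ =>
    hepi Prop (fun _ => Set.univ) β γ (isSoftMorphism_to_univ G β) (isSoftMorphism_to_univ G γ)

/-- A soft morphism `α : (A, F) → (B, G)` is an epimorphism in the category of soft sets
over `U` if and only if `α` is surjective. -/
theorem softMorphism_epi_iff_surjective {U A B : Type} (F : A → Set U) (G : B → Set U)
    (α : A → B) (hα : IsSoftMorphism F G α) :
    (∀ (C : Type) (H : C → Set U) (β γ : B → C),
        IsSoftMorphism G H β → IsSoftMorphism G H γ → β ∘ α = γ ∘ α → β = γ) ↔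
      Function.Surjective α :=
  softMorphism_epi_iff_surjective_general G α
end

section
/- In the category of soft sets over a universe U, a soft morphism α from a soft set (A, F) to a soft set (B, G) is a bimorphism (i.e., both a monomorphism and an epimorphism, where α is a monomorphism means that for every soft set (C, H) over U and all soft morphisms β, γ from (C, H) to (A, F), α ∘ β = α ∘ γ implies β = γ, and α is an epimorphism means that for every soft set (C, H) over U and all soft morphisms β, γ from (B, G) to (C, H), β ∘ α = γ ∘ α implies β = γ) if and only if α is bijective. -/
/-!
Every map out of a soft set whose values are all empty is a soft morphism, and so is every map
into a soft set whose values are all `univ`. Testing cancellability against these soft sets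
reduces soft monomorphisms and epimorphisms to monomorphisms and epimorphisms of types, that is,
to injective and surjective maps.
-/

namespace IsSoftMorphism

variable {U A B : Type}

theorem of_empty (G : B → Set U) (f : A → B) : IsSoftMorphism (fun _ => ∅) G f :=
  fun _ => Set.empty_subset _

theorem to_univ (F : A → Set U) (f : A → B) : IsSoftMorphism F (fun _ => Set.univ) f :=
  fun _ => Set.subset_univ _

end IsSoftMorphism

section

variable {U A B : Type}

def IsSoftMono (F : A → Set U) (α : A → B) : Prop :=
  ∀ (C : Type) (H : C → Set U) (β γ : C → A),
    IsSoftMorphism H F β → IsSoftMorphism H F γ → α ∘ β = α ∘ γ → β = γ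

def IsSoftEpi (G : B → Set U) (α : A → B) : Prop :=
  ∀ (C : Type) (H : C → Set U) (β γ : B → C),
    IsSoftMorphism G H β → IsSoftMorphism G H γ → β ∘ α = γ ∘ α → β = γ

theorem isSoftMono_iff_injective (F : A → Set U) (α : A → B) :
    IsSoftMono F α ↔ Function.Injective α := by
  refine ⟨fun hmono => ?_, fun hinj _ _ _ _ _ _ h => hinj.comp_left h⟩
  rw [← Function.injective_comp_left_iff (α := Unit)]
  exact fun β γ => hmono Unit (fun _ => ∅) β γ
    (IsSoftMorphism.of_empty F β) (IsSoftMorphism.of_empty F γ)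

theorem isSoftEpi_iff_surjective (G : B → Set U) (α : A → B) :
    IsSoftEpi G α ↔ Function.Surjective α := by
  refine ⟨fun hepi => ?_, fun hsurj _ _ _ _ _ _ h => hsurj.injective_comp_right h⟩
  exact Function.surjective_of_right_cancellable_Prop fun β γ =>
    hepi Prop (fun _ => Set.univ) β γ (IsSoftMorphism.to_univ G β) (IsSoftMorphism.to_univ G γ)

end

theorem softMorphism_bimorphism_iff_bijective_general {U A B : Type} (F : A → Set U) (G : B → Set U)
    (α : A → B) :
    ((∀ (C : Type) (H : C → Set U) (β γ : C → A),
        IsSoftMorphism H F β → IsSoftMorphism H F γ → α ∘ β = α ∘ γ → β = γ) ∧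
     (∀ (C : Type) (H : C → Set U) (β γ : B → C),
        IsSoftMorphism G H β → IsSoftMorphism G H γ → β ∘ α = γ ∘ α → β = γ)) ↔
      Function.Bijective α :=
  and_congr (isSoftMono_iff_injective F α) (isSoftEpi_iff_surjective G α)

/-- A soft morphism `α : (A, F) → (B, G)` is a bimorphism (both a monomorphism and an
epimorphism) in the category of soft sets over `U` if and only if `α` is bijective. -/
theorem softMorphism_bimorphism_iff_bijective {U A B : Type} (F : A → Set U) (G : B → Set U)
    (α : A → B) (hα : IsSoftMorphism F G α) :
    ((∀ (C : Type) (H : C → Set U) (β γ : C → A),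
        IsSoftMorphism H F β → IsSoftMorphism H F γ → α ∘ β = α ∘ γ → β = γ) ∧
     (∀ (C : Type) (H : C → Set U) (β γ : B → C),
        IsSoftMorphism G H β → IsSoftMorphism G H γ → β ∘ α = γ ∘ α → β = γ)) ↔
      Function.Bijective α :=
  softMorphism_bimorphism_iff_bijective_general F G α
end
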